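/- Let G be the cyclic group of order two. Let L be the three-element poset {0, 1, 2} with order generated by 0 ≤ 2 and 1 ≤ 2, with the G-action in which the nontrivial element swaps 0 and 1 and fixes 2. Let K = {0, 1} be the G-stable sieve of L consisting of 0 and 1, let X = {∗} be a one-point poset with trivial G-action, and let f : K → X be the unique map. The explicit pushout Y of the sieve inclusion K → L along f is the two-element poset {∗, 2} with ∗ ≤ 2 and trivial G-action, so Y^G = Y. Then the square of G-fixed subposets — with vertices K^G = ∅, X^G = {∗}, L^G = {2}, Y^G = Y and the restricted maps — is NOT a pushout square in the category of partial orders and monotone maps. -/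

import Mathlib

/-!
Statement 10: the example showing that fixed points need not preserve pushouts
along sieve inclusions that are not Dwyer G-maps.  `G` is cyclic of order two
(realized as `ℤˣ`), `L = {0, 1, 2}` with `0 ≤ 2`, `1 ≤ 2` and the action swapping
`0` and `1`, `K = {0, 1}`, `X = {∗}`.  The explicit pushout `Y` is `{∗ ≤ 2}` with
trivial action, and the square of `G`-fixed subposets (with `K^G = ∅`,
`X^G = {∗}`, `L^G = {2}`, `Y^G = Y`) is NOT a pushout of posets.
-/

/-- The three element poset `L` (underlying type `Fin 3`). -/
def L10 : Type := Fin 3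

instance : DecidableEq L10 := inferInstanceAs (DecidableEq (Fin 3))
instance : Fintype L10 := inferInstanceAs (Fintype (Fin 3))

def l0 : L10 := (0 : Fin 3)
def l1 : L10 := (1 : Fin 3)
def l2 : L10 := (2 : Fin 3)

/-- The order on `L` generated by `0 ≤ 2` and `1 ≤ 2`. -/
instance : PartialOrder L10 where
  le a b := a = b ∨ b = l2
  le_refl a := Or.inl rfl
  le_trans a b c hab hbc := by
    rcases hbc with rfl | rfl
    · exact hab
    · exact Or.inr rfl
  le_antisymm a b hab hba := by
    rcases hab with rfl | h2
    · rfl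
    · rcases hba with rfl | h2'
      · rfl
      · rw [h2, h2']

/-- The involution of `L` swapping `0` and `1` and fixing `2`. -/
def sigma10 : L10 → L10 := (![1, 0, 2] : Fin 3 → Fin 3)

instance : DecidableRel (α := L10) (· ≤ ·) :=
  fun a b => decidable_of_iff (a = b ∨ b = l2) Iff.rfl

lemma sigma10_sigma10 : ∀ x : L10, sigma10 (sigma10 x) = x := by decide

lemma sigma10_monotone : ∀ x y : L10, x ≤ y → sigma10 x ≤ sigma10 y := by decide

/-- The action of the cyclic group of order two `ℤˣ` on `L`:
the nontrivial element acts by `sigma10`. -/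
instance instSMulL10 : SMul ℤˣ L10 := ⟨fun g x => if (g : ℤ) = 1 then x else sigma10 x⟩

lemma smul_L10_def (g : ℤˣ) (x : L10) :
    g • x = if (g : ℤ) = 1 then x else sigma10 x := rfl

instance : MulAction ℤˣ L10 where
  one_smul x := by rw [smul_L10_def]; simp
  mul_smul g h x := by
    rcases Int.units_eq_one_or g with rfl | rfl <;>
      rcases Int.units_eq_one_or h with rfl | rfl <;>
      simp [smul_L10_def, sigma10_sigma10]

/-- The trivial action of `ℤˣ` on the one-point poset `X = {∗}`. -/
instance : MulAction ℤˣ PUnit where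
  smul _ x := x
  one_smul _ := rfl
  mul_smul _ _ _ := rfl

/-- The `G`-stable sieve `K = {0, 1}` of `L`. -/
def K10 : Set L10 := {x | x = l0 ∨ x = l1}

instance (x : L10) : Decidable (x ∈ K10) :=
  decidable_of_iff (x = l0 ∨ x = l1) Iff.rfl

lemma K10_sieve : ∀ ⦃x y : L10⦄, x ≤ y → y ∈ K10 → x ∈ K10 := by decide

lemma sigma10_mem_K10 : ∀ l ∈ K10, sigma10 l ∈ K10 := by decide

lemma K10_stable : ∀ (g : ℤˣ) (l : L10), l ∈ K10 → g • l ∈ K10 := by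
  intro g l hl
  rcases Int.units_eq_one_or g with rfl | rfl <;> rw [smul_L10_def]
  · simpa using hl
  · have h : ((-1 : ℤˣ) : ℤ) ≠ 1 := by norm_num
    rw [if_neg h]
    exact sigma10_mem_K10 l hl

/-- The unique map `f : K → X = {∗}`. -/
def f10 : K10 → PUnit := fun _ => PUnit.unit

/-- The underlying type `(L \ K) ⊔ X` of the explicit pushout. -/
def PushY {L : Type} (K : Set L) (X : Type) : Type :=
  {l : L // l ∉ K} ⊕ X

/-- The order relation on the explicit pushout. -/
def pushLE {L : Type} [PartialOrder L] (K : Set L) {X : Type} [PartialOrder X]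
    (f : K → X) : PushY K X → PushY K X → Prop
  | Sum.inl y₁, Sum.inl y₂ => y₁.1 ≤ y₂.1
  | Sum.inl _, Sum.inr _ => False
  | Sum.inr x, Sum.inl y => ∃ w : K, x ≤ f w ∧ (w : L) ≤ y.1
  | Sum.inr x₁, Sum.inr x₂ => x₁ ≤ x₂

open Classical in
/-- The map `g : L → Y`, given by `f` on `K` and the identity on `L \ K`. -/
noncomputable def pushG {L : Type} (K : Set L) {X : Type} (f : K → X) (l : L) :
    PushY K X :=
  if h : l ∈ K then Sum.inr (f ⟨l, h⟩) else Sum.inl ⟨l, h⟩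

/-- The induced `G`-action on the explicit pushout. -/
def pushSMul {G : Type*} [Group G] {L : Type} {X : Type}
    [MulAction G L] [MulAction G X] (K : Set L)
    (hKstab : ∀ (g : G) (l : L), l ∈ K → g • l ∈ K) (g : G) :
    PushY K X → PushY K X
  | Sum.inl y => Sum.inl ⟨g • y.1, fun h => y.2 (by
      have := hKstab g⁻¹ _ h
      simpa using this)⟩
  | Sum.inr x => Sum.inr (g • x)

/-
Since `K` has no fixed points, the compatibility condition on a cocone over the fixed-point
square is vacuous, so a pushout of the fixed points would be the disjoint union `L^G ⊔ X^G`,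
in which `∗` and `2` are incomparable. But `∗ ≤ 2` in `Y^G = Y`, so sending `L^G` to `false`
and `X^G` to `true` gives a cocone in `Bool` that no monotone map out of `Y^G` factors.
-/

lemma Int.units_forall_smul_eq_iff {α : Type*} [MulAction ℤˣ α] (a : α) :
    (∀ g : ℤˣ, g • a = a) ↔ (-1 : ℤˣ) • a = a := by
  refine ⟨fun h => h (-1), fun h g => ?_⟩
  rcases Int.units_eq_one_or g with rfl | rfl
  · exact one_smul _ a
  · exact h

theorem not_fixedPoints_pushout_of_pushLE {G : Type*} [Group G] {L X : Type} [PartialOrder L]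
    [PartialOrder X] [MulAction G L] [MulAction G X] (K : Set L)
    (hKstab : ∀ (g : G) (l : L), l ∈ K → g • l ∈ K) (f : K → X)
    (hK : ¬ ∃ k : L, k ∈ K ∧ ∀ g : G, g • k = k)
    (x : X) (hx : ∀ g : G, g • x = x) (hxY : ∀ g : G, pushSMul K hKstab g (Sum.inr x) = Sum.inr x)
    (l : L) (hl : ∀ g : G, g • l = l)
    (hlY : ∀ g : G, pushSMul K hKstab g (pushG K f l) = pushG K f l)
    (hle : pushLE K f (Sum.inr x) (pushG K f l)) :
    ¬ (∀ (Z : Type) [PartialOrder Z]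
      (u : {l : L // ∀ g : G, g • l = l} → Z)
      (v : {x : X // ∀ g : G, g • x = x} → Z),
      Monotone u → Monotone v →
      (∀ (k : L) (hk : k ∈ K) (hfixL : ∀ g : G, g • k = k)
        (hfixX : ∀ g : G, g • f ⟨k, hk⟩ = f ⟨k, hk⟩),
        u ⟨k, hfixL⟩ = v ⟨f ⟨k, hk⟩, hfixX⟩) →
      ∃! t : {a : PushY K X // ∀ g : G, pushSMul K hKstab g a = a} → Z,
        (∀ a b : {a : PushY K X // ∀ g : G, pushSMul K hKstab g a = a},
          pushLE K f a.1 b.1 → t a ≤ t b) ∧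
        (∀ (l : L) (hfixL : ∀ g : G, g • l = l)
          (hfixY : ∀ g : G, pushSMul K hKstab g (pushG K f l) = pushG K f l),
          t ⟨pushG K f l, hfixY⟩ = u ⟨l, hfixL⟩) ∧
        (∀ (x : X) (hfixX : ∀ g : G, g • x = x)
          (hfixY : ∀ g : G, pushSMul K hKstab g (Sum.inr x) = Sum.inr x),
          t ⟨Sum.inr x, hfixY⟩ = v ⟨x, hfixX⟩)) := by
  intro h
  obtain ⟨t, ⟨ht_mono, ht_u, ht_v⟩, -⟩ :=
    h Bool (fun _ => false) (fun _ => true) monotone_const monotone_const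
      (fun k hk hfixL _ => absurd ⟨k, hk, hfixL⟩ hK)
  have h_le : t ⟨Sum.inr x, hxY⟩ ≤ t ⟨pushG K f l, hlY⟩ := ht_mono _ _ hle
  rw [ht_u l hl, ht_v x hx] at h_le
  exact absurd h_le (by decide)

lemma neg_one_smul_L10 (x : L10) : (-1 : ℤˣ) • x = sigma10 x := by
  rw [smul_L10_def]; norm_num

lemma fixed_L10_iff (l : L10) : (∀ g : ℤˣ, g • l = l) ↔ l = l2 := by
  rw [Int.units_forall_smul_eq_iff, neg_one_smul_L10]
  revert l
  decide

lemma not_exists_fixed_mem_K10 : ¬ ∃ k : L10, k ∈ K10 ∧ ∀ g : ℤˣ, g • k = k := by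
  rintro ⟨k, hk, hfix⟩
  rw [fixed_L10_iff] at hfix
  subst hfix
  revert hk
  decide

lemma eq_l2_of_not_mem_K10 : ∀ l : L10, l ∉ K10 → l = l2 := by decide

lemma pushSMul_K10_eq_self (a : PushY K10 PUnit) (g : ℤˣ) :
    pushSMul K10 K10_stable g a = a := by
  rcases a with ⟨y, hy⟩ | x
  · obtain rfl := eq_l2_of_not_mem_K10 y hy
    exact congrArg Sum.inl (Subtype.ext ((fixed_L10_iff l2).2 rfl g))
  · rfl

lemma pushLE_unit_pushG_l2 : pushLE K10 f10 (Sum.inr PUnit.unit) (pushG K10 f10 l2) := by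
  rw [show pushG K10 f10 l2 = Sum.inl ⟨l2, by decide⟩ from dif_neg (by decide)]
  exact ⟨⟨l0, Or.inl rfl⟩, le_rfl, Or.inr rfl⟩

theorem statement10 :
    -- `K^G = ∅`:
    (¬ ∃ k : L10, k ∈ K10 ∧ ∀ g : ℤˣ, g • k = k) ∧
    -- `L^G = {2}`:
    (∀ l : L10, (∀ g : ℤˣ, g • l = l) ↔ l = l2) ∧
    -- `Y^G = Y`:
    (∀ a : PushY K10 PUnit, ∀ g : ℤˣ, pushSMul K10 K10_stable g a = a) ∧
    -- the square of `G`-fixed subposets is NOT a pushout square of posets: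
    ¬ (∀ (Z : Type) [PartialOrder Z]
      (u : {l : L10 // ∀ g : ℤˣ, g • l = l} → Z)
      (v : {x : PUnit // ∀ g : ℤˣ, g • x = x} → Z),
      Monotone u → Monotone v →
      (∀ (k : L10) (hk : k ∈ K10) (hfixL : ∀ g : ℤˣ, g • k = k)
        (hfixX : ∀ g : ℤˣ, g • f10 ⟨k, hk⟩ = f10 ⟨k, hk⟩),
        u ⟨k, hfixL⟩ = v ⟨f10 ⟨k, hk⟩, hfixX⟩) →
      ∃! t : {a : PushY K10 PUnit // ∀ g : ℤˣ, pushSMul K10 K10_stable g a = a} → Z,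
        (∀ a b : {a : PushY K10 PUnit // ∀ g : ℤˣ, pushSMul K10 K10_stable g a = a},
          pushLE K10 f10 a.1 b.1 → t a ≤ t b) ∧
        (∀ (l : L10) (hfixL : ∀ g : ℤˣ, g • l = l)
          (hfixY : ∀ g : ℤˣ, pushSMul K10 K10_stable g (pushG K10 f10 l) = pushG K10 f10 l),
          t ⟨pushG K10 f10 l, hfixY⟩ = u ⟨l, hfixL⟩) ∧
        (∀ (x : PUnit) (hfixX : ∀ g : ℤˣ, g • x = x)
          (hfixY : ∀ g : ℤˣ, pushSMul K10 K10_stable g (Sum.inr x) = Sum.inr x),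
          t ⟨Sum.inr x, hfixY⟩ = v ⟨x, hfixX⟩)) := by
  refine ⟨not_exists_fixed_mem_K10, fixed_L10_iff, pushSMul_K10_eq_self, ?_⟩
  exact not_fixedPoints_pushout_of_pushLE K10 K10_stable f10 not_exists_fixed_mem_K10
    PUnit.unit (fun _ => rfl) (pushSMul_K10_eq_self _) l2 ((fixed_L10_iff l2).2 rfl)
    (pushSMul_K10_eq_self _) pushLE_unit_pushG_l2
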